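/- Let G be a Class 2 simple graph with maximum degree Δ and let F = F_φ(r, s₁:s_p) be a multifan with respect to a critical edge e = rs₁ and a coloring φ ∈ C^Δ(G−e). Let δ ∈ φ̄(s_i) and λ ∈ φ̄(s_j) with i, j ∈ [1,p] and i ≠ j. If δ and λ are induced by the same color α ∈ φ̄(s₁), δ ≺ λ, and s_i and s_j are (δ,λ)-unlinked with respect to φ, then r lies on the (δ,λ)-chain containing s_j. -/

import Mathlib

/-- `c` is a proper edge coloring of `G` using colors in `{1, …, k}`:
every edge gets a color in `[1,k]`, and distinct edges sharing an endpoint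
get distinct colors. -/
def IsEdgeColoring {V : Type*} (G : SimpleGraph V) (k : ℕ) (c : Sym2 V → ℕ) : Prop :=
  (∀ e ∈ G.edgeSet, 1 ≤ c e ∧ c e ≤ k) ∧
    ∀ e ∈ G.edgeSet, ∀ f ∈ G.edgeSet, e ≠ f → (∃ v, v ∈ e ∧ v ∈ f) → c e ≠ c f

/-- The chromatic index `χ'(G)`: the least `k` admitting a proper edge `k`-coloring. -/
noncomputable def chromIndex {V : Type*} (G : SimpleGraph V) : ℕ :=
  sInf {k | ∃ c, IsEdgeColoring G k c}

/-- An edge `e` of `G` is critical if `χ'(G-e) < χ'(G)`. -/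
def IsCriticalEdge {V : Type*} (G : SimpleGraph V) (e : Sym2 V) : Prop :=
  e ∈ G.edgeSet ∧ chromIndex (G.deleteEdges {e}) < chromIndex G

/-- The set of colors of `[1,k]` missing at `v` under the coloring `c` of `G`. -/
def missingColors {V : Type*} (G : SimpleGraph V) (k : ℕ) (c : Sym2 V → ℕ) (v : V) : Set ℕ :=
  {α | 1 ≤ α ∧ α ≤ k ∧ ∀ e ∈ G.edgeSet, v ∈ e → c e ≠ α}

/-- `G` is `Δ`-critical: `Δ` is the maximum degree of `G`, `χ'(G) = Δ+1`, and every
proper subgraph has chromatic index less than `Δ+1`. -/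
def IsDeltaCritical {V : Type*} [Fintype V] (G : SimpleGraph V) [DecidableRel G.Adj]
    (Δ : ℕ) : Prop :=
  G.maxDegree = Δ ∧ chromIndex G = Δ + 1 ∧
    ∀ H : SimpleGraph V, H ≤ G → H ≠ G → chromIndex H < Δ + 1

/-- A Kierstead path `(v₀, v₀v₁, v₁, …, v_{p-1}v_p, v_p)` with respect to the edge
`v₀v₁` and a `k`-coloring `c` of `G - v₀v₁`, encoded by the list `P = [v₀, …, v_p]`. -/
structure IsKiersteadPath {V : Type*} (G : SimpleGraph V) (k : ℕ) (c : Sym2 V → ℕ)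
    (P : List V) : Prop where
  two_le : 2 ≤ P.length
  nodup : P.Nodup
  adj : ∀ (i : ℕ) (h : i + 1 < P.length), G.Adj (P[i]'(by omega)) (P[i+1]'h)
  color : ∀ (i : ℕ) (h : i + 1 < P.length), 1 ≤ i →
      ∃ (j : ℕ) (_ : j ≤ i),
        c (s(P[i]'(by omega), P[i+1]'h)) ∈
          missingColors (G.deleteEdges {s(P[0]'(by omega), P[1]'(by omega))}) k c
            (P[j]'(by omega))

/-- A multifan centered at `r` with respect to the edge `r s₁` and a `k`-coloring `c` of
`G - r s₁`, encoded by `r` and the list `sl = [s₁, …, s_p]`. -/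
structure IsMultifan {V : Type*} (G : SimpleGraph V) (k : ℕ) (c : Sym2 V → ℕ)
    (r : V) (sl : List V) : Prop where
  one_le : 1 ≤ sl.length
  nodup : (r :: sl).Nodup
  adj : ∀ (i : ℕ) (h : i < sl.length), G.Adj r (sl[i]'h)
  color : ∀ (i : ℕ) (h : i < sl.length), 1 ≤ i →
      ∃ (j : ℕ) (_ : j < i),
        c (s(r, sl[i]'h)) ∈
          missingColors (G.deleteEdges {s(r, sl[0]'(by omega))}) k c
            (sl[j]'(by omega))

/-- The subgraph of `G` whose edges are the edges colored `α` or `β` by `c`;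
its components are the `(α,β)`-chains. -/
def chainGraph {V : Type*} (G : SimpleGraph V) (c : Sym2 V → ℕ) (α β : ℕ) :
    SimpleGraph V where
  Adj x y := G.Adj x y ∧ (c (s(x, y)) = α ∨ c (s(x, y)) = β)
  symm := ⟨by
    intro x y hxy
    refine ⟨hxy.1.symm, ?_⟩
    rw [Sym2.eq_swap]
    exact hxy.2⟩
  loopless := ⟨fun x hx => G.loopless.irrefl x hx.1⟩

/-- `x` and `y` are `(α,β)`-linked with respect to the coloring `c` of `G`:
they belong to the same `(α,β)`-chain. -/
def Linked {V : Type*} (G : SimpleGraph V) (c : Sym2 V → ℕ) (α β : ℕ) (x y : V) : Prop :=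
  (chainGraph G c α β).Reachable x y


/-- An `α`-sequence of the multifan `(r, sl)` with respect to the coloring `c` of `G'`
(`G' = G - r s₁`): a nonempty subsequence `T = s_{ℓ₁}, …, s_{ℓ_k}` of `sl` with
`c (r s_{ℓ₁}) = α ∈ c̄(s₁)` and `c (r s_{ℓ_i}) ∈ c̄(s_{ℓ_{i-1}})` for `i ∈ [2,k]`. -/
structure IsAlphaSeq {V : Type*} (G' : SimpleGraph V) (k : ℕ) (c : Sym2 V → ℕ)
    (r s₁ : V) (sl : List V) (α : ℕ) (T : List V) : Prop where
  ne : T ≠ []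
  sub : T.Sublist sl
  alpha_missing : α ∈ missingColors G' k c s₁
  color_first : c (s(r, T.head ne)) = α
  chain : ∀ (i : ℕ) (h : i + 1 < T.length),
    c (s(r, T[i+1]'h)) ∈ missingColors G' k c (T[i]'(by omega))

/-- The color `β` is induced by `α` (i.e. `β` is an `α`-inducing color) with respect to
the multifan `(r, sl)`: either `β = α`, or `β` is missing at some vertex of an
`α`-sequence. -/
def InducedBy {V : Type*} (G' : SimpleGraph V) (k : ℕ) (c : Sym2 V → ℕ)
    (r s₁ : V) (sl : List V) (β α : ℕ) : Prop :=
  β = α ∨ ∃ T : List V, IsAlphaSeq G' k c r s₁ sl α T ∧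
    ∃ v ∈ T, β ∈ missingColors G' k c v

/-- `δ ≺ β` for two `α`-inducing colors `δ, β`: either `δ = α` and `β ≠ α` is
`α`-inducing, or there is an `α`-sequence `s_{ℓ₁}, …, s_{ℓ_k}` with
`δ ∈ c̄(s_{ℓ_i})`, `β ∈ c̄(s_{ℓ_j})` and `i < j`. -/
def PrecColor {V : Type*} (G' : SimpleGraph V) (k : ℕ) (c : Sym2 V → ℕ)
    (r s₁ : V) (sl : List V) (α δ β : ℕ) : Prop :=
  (δ = α ∧ β ≠ α ∧ InducedBy G' k c r s₁ sl β α) ∨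
  ∃ T : List V, IsAlphaSeq G' k c r s₁ sl α T ∧
    ∃ (i j : ℕ) (hi : i < T.length) (hj : j < T.length), i < j ∧
      δ ∈ missingColors G' k c (T[i]'hi) ∧ β ∈ missingColors G' k c (T[j]'hj)

/-!
Every vertex of a multifan is the end of a *linear* fan `s₁, y₁, …, y_m` in which the color of
`r y_{k+1}` is missing at `y_k`. If the end of a linear fan shares a missing color with `r`,
shifting the colors down the fan frees a color for `r s₁`, which is impossible in a Class 2
graph. Hence the multifan is elementary: if `d` were missing at two of its vertices and `γ` at
`r`, the `(γ,d)`-chain of `r` is a path ending at `r`, so it misses one of the two vertices, and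
a Kempe change at that vertex produces a linear fan whose end misses `γ`.

If `r` were not on the `(δ,λ)`-chain `P` of `s_j`, swap `δ` and `λ` on `P`. The linear fan to
`s_i` through the earlier vertices of the `α`-sequence avoids `s_j`, and a linear fan to `s_j`
meets `s_j` only at its end; by elementarity no other vertex of either fan on `P` misses `δ` or
`λ`, so both fans survive the swap. But afterwards `δ` is missing at both `s_i` and `s_j`.
-/

open SimpleGraph

section Coloring

variable {V : Type*} {H : SimpleGraph V} {Δ : ℕ} {ψ ψ' : Sym2 V → ℕ}

lemma not_exists_isEdgeColoring_of_lt_chromIndex {k : ℕ} (h : k < chromIndex H) :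
    ¬ ∃ c, IsEdgeColoring H k c :=
  fun hc => (Nat.sInf_le hc).not_gt h

lemma IsEdgeColoring.anti {H' : SimpleGraph V} (hψ : IsEdgeColoring H Δ ψ) (h : H' ≤ H) :
    IsEdgeColoring H' Δ ψ :=
  ⟨fun e he => hψ.1 e (edgeSet_mono h he),
    fun e he f hf => hψ.2 e (edgeSet_mono h he) f (edgeSet_mono h hf)⟩

lemma IsEdgeColoring.ne_of_adj (hψ : IsEdgeColoring H Δ ψ) {u w w' : V} (hw : H.Adj u w)
    (hw' : H.Adj u w') (hne : w ≠ w') : ψ s(u, w) ≠ ψ s(u, w') :=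
  hψ.2 _ hw _ hw' (fun h => hne (Sym2.congr_right.mp h))
    ⟨u, Sym2.mem_mk_left _ _, Sym2.mem_mk_left _ _⟩

lemma mem_missingColors_iff {v : V} {c : ℕ} :
    c ∈ missingColors H Δ ψ v ↔ c ∈ Set.Icc 1 Δ ∧ ∀ e ∈ H.edgeSet, v ∈ e → ψ e ≠ c :=
  and_assoc.symm

lemma missingColors_anti {H' : SimpleGraph V} (h : H' ≤ H) (v : V) :
    missingColors H Δ ψ v ⊆ missingColors H' Δ ψ v :=
  fun _ hc => ⟨hc.1, hc.2.1, fun e he => hc.2.2 e (edgeSet_mono h he)⟩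

lemma missingColors_congr {v : V} (h : ∀ e ∈ H.edgeSet, v ∈ e → ψ' e = ψ e) :
    missingColors H Δ ψ' v = missingColors H Δ ψ v := by
  ext c
  simp +contextual only [missingColors, Set.mem_ofPred_eq, h]

lemma IsEdgeColoring.update_of_mem_missingColors [DecidableEq V] {u v : V} {γ : ℕ}
    (hψ : IsEdgeColoring (H.deleteEdges {s(u, v)}) Δ ψ)
    (hu : γ ∈ missingColors (H.deleteEdges {s(u, v)}) Δ ψ u)
    (hv : γ ∈ missingColors (H.deleteEdges {s(u, v)}) Δ ψ v) :
    IsEdgeColoring H Δ (Function.update ψ s(u, v) γ) := by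
  have hdel : ∀ f ∈ H.edgeSet, f ≠ s(u, v) → f ∈ (H.deleteEdges {s(u, v)}).edgeSet :=
    fun f hf hne => by simpa [edgeSet_deleteEdges] using ⟨hf, hne⟩
  have hmiss : ∀ f ∈ H.edgeSet, f ≠ s(u, v) → (∃ x, x ∈ s(u, v) ∧ x ∈ f) → ψ f ≠ γ := by
    rintro f hf hne ⟨x, hx, hxf⟩
    rcases Sym2.mem_iff.mp hx with rfl | rfl
    exacts [hu.2.2 f (hdel f hf hne) hxf, hv.2.2 f (hdel f hf hne) hxf]
  refine ⟨fun f hf => ?_, fun f hf g hg hfg hshare => ?_⟩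
  · by_cases hfe : f = s(u, v)
    · subst hfe
      simpa using ⟨hu.1, hu.2.1⟩
    · rw [Function.update_of_ne hfe]
      exact hψ.1 f (hdel f hf hfe)
  · by_cases hfe : f = s(u, v) <;> by_cases hge : g = s(u, v)
    · exact absurd (hfe.trans hge.symm) hfg
    · subst hfe
      rw [Function.update_self, Function.update_of_ne hge]
      exact (hmiss g hg hge hshare).symm
    · subst hge
      rw [Function.update_self, Function.update_of_ne hfe]
      exact hmiss f hf hfe (hshare.imp fun _ => And.symm)
    · rw [Function.update_of_ne hfe, Function.update_of_ne hge]
      exact hψ.2 f (hdel f hf hfe) g (hdel g hg hge) hfg hshare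

lemma missingColors_update_of_notMem [DecidableEq V] {e : Sym2 V} {v : V} (hv : v ∉ e)
    (γ : ℕ) : missingColors H Δ (Function.update ψ e γ) v = missingColors H Δ ψ v :=
  missingColors_congr fun _ _ hvf => Function.update_of_ne (by rintro rfl; exact hv hvf) _ _

lemma IsEdgeColoring.mem_missingColors_update [DecidableEq V] (hψ : IsEdgeColoring H Δ ψ)
    {u v : V} (huv : H.Adj u v) {γ : ℕ} (hγ : γ ≠ ψ s(u, v)) :
    ψ s(u, v) ∈ missingColors H Δ (Function.update ψ s(u, v) γ) u := by
  refine ⟨(hψ.1 _ huv).1, (hψ.1 _ huv).2, fun f hf huf => ?_⟩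
  obtain ⟨w, rfl⟩ := Sym2.mem_iff_exists.mp huf
  by_cases hw : w = v
  · subst hw
    rw [Function.update_self]
    exact hγ
  · rw [Function.update_of_ne (fun h => hw (Sym2.congr_right.mp h))]
    exact hψ.ne_of_adj hf huv hw

lemma exists_mem_missingColors_deleteEdges [Fintype V] [DecidableRel H.Adj] {r s : V}
    (hdeg : H.degree r ≤ Δ) (hrs : H.Adj r s) :
    ∃ γ, γ ∈ missingColors (H.deleteEdges {s(r, s)}) Δ ψ r := by
  classical
  set P := ((H.neighborFinset r).erase s).image fun w => ψ s(r, w)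
  have hP : P.card < (Finset.Icc 1 Δ).card := by
    have := H.degree_pos_iff_exists_adj r |>.mpr ⟨s, hrs⟩
    calc P.card ≤ ((H.neighborFinset r).erase s).card := Finset.card_image_le
      _ = H.degree r - 1 := by
        rw [Finset.card_erase_of_mem ((H.mem_neighborFinset r s).mpr hrs),
          card_neighborFinset_eq_degree]
      _ < (Finset.Icc 1 Δ).card := by rw [Nat.card_Icc]; omega
  obtain ⟨γ, hγΔ, hγP⟩ := Finset.exists_mem_notMem_of_card_lt_card hP
  rw [Finset.mem_Icc] at hγΔ
  refine ⟨γ, hγΔ.1, hγΔ.2, fun f hf hrf hfγ => hγP ?_⟩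
  obtain ⟨w, rfl⟩ := Sym2.mem_iff_exists.mp hrf
  rw [edgeSet_deleteEdges] at hf
  refine Finset.mem_image.mpr ⟨w, Finset.mem_erase.mpr ⟨?_, (H.mem_neighborFinset r w).mpr hf.1⟩,
    hfγ⟩
  rintro rfl
  exact hf.2 rfl

end Coloring

section Leaves

variable {V : Type*} {H : SimpleGraph V}

/-- In a graph of maximum degree two, paths leaving `u` away from a neighbor `t` coincide
until one of them stops, and a leaf cannot be passed through. -/
lemma SimpleGraph.Walk.eq_of_isPath_of_leaves
    (hdeg : ∀ u t, H.Adj u t → (H.neighborSet u \ {t}).Subsingleton) {y z : V}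
    (hy : (H.neighborSet y).Subsingleton) (hz : (H.neighborSet z).Subsingleton) {u t : V}
    (p : H.Walk u y) (q : H.Walk u z) (hp : p.IsPath) (hq : q.IsPath) (hut : H.Adj u t)
    (htp : t ∉ p.support) (htq : t ∉ q.support) : y = z := by
  induction p generalizing t with
  | nil =>
    cases q with
    | nil => rfl
    | cons h q' => exact absurd (by rw [hy hut h]; simp) htq
  | @cons u w y h p' ih =>
    rw [Walk.cons_isPath_iff] at hp
    have htw : t ≠ w := by rintro rfl; simp at htp
    cases q with
    | nil => exact absurd (by rw [hz hut h]; simp) htp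
    | @cons _ w' _ h' q' =>
      rw [Walk.cons_isPath_iff] at hq
      have htw' : t ≠ w' := by rintro rfl; simp at htq
      obtain rfl : w = w' := hdeg u t hut ⟨h, htw.symm⟩ ⟨h', htw'.symm⟩
      exact ih hy q' hp.1 hq.1 h.symm hp.2 hq.2

lemma SimpleGraph.Reachable.eq_of_leaves
    (hdeg : ∀ u t, H.Adj u t → (H.neighborSet u \ {t}).Subsingleton) {x y z : V}
    (hx : (H.neighborSet x).Subsingleton) (hy : (H.neighborSet y).Subsingleton)
    (hz : (H.neighborSet z).Subsingleton) (hxy : x ≠ y) (hxz : x ≠ z)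
    (hry : H.Reachable x y) (hrz : H.Reachable x z) : y = z := by
  obtain ⟨p, hp⟩ := hry.exists_isPath
  obtain ⟨q, hq⟩ := hrz.exists_isPath
  cases p with
  | nil => exact absurd rfl hxy
  | cons h p' =>
    cases q with
    | nil => exact absurd rfl hxz
    | cons h' q' =>
      obtain rfl := hx h h'
      rw [Walk.cons_isPath_iff] at hp hq
      exact p'.eq_of_isPath_of_leaves hdeg hy hz q' hp.1 hq.1 h.symm hp.2 hq.2

end Leaves

section Chain

variable {V : Type*} {H : SimpleGraph V} {Δ : ℕ} {ψ : Sym2 V → ℕ} {a b : ℕ}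

lemma chainGraph_eq_of_color_eq (hψ : IsEdgeColoring H Δ ψ) {u w w' : V}
    (hw : (chainGraph H ψ a b).Adj u w) (hw' : (chainGraph H ψ a b).Adj u w')
    (h : ψ s(u, w) = ψ s(u, w')) : w = w' := by
  by_contra hne
  exact hψ.ne_of_adj hw.1 hw'.1 hne h

lemma neighborSet_chainGraph_subsingleton (hψ : IsEdgeColoring H Δ ψ) {v : V} {c : ℕ}
    (hc : c ∈ missingColors H Δ ψ v) (hcab : c = a ∨ c = b) :
    ((chainGraph H ψ a b).neighborSet v).Subsingleton := by
  intro w hw w' hw'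
  have h := hc.2.2 _ hw.1 (Sym2.mem_mk_left _ _)
  have h' := hc.2.2 _ hw'.1 (Sym2.mem_mk_left _ _)
  refine chainGraph_eq_of_color_eq hψ hw hw' ?_
  rcases hw.2 with e | e <;> rcases hw'.2 with e' | e' <;> rcases hcab with rfl | rfl <;> omega

lemma neighborSet_chainGraph_diff_subsingleton (hψ : IsEdgeColoring H Δ ψ) {u t : V}
    (ht : (chainGraph H ψ a b).Adj u t) :
    ((chainGraph H ψ a b).neighborSet u \ {t}).Subsingleton := by
  rintro w ⟨hw, hwt⟩ w' ⟨hw', hw't⟩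
  have h : ψ s(u, w) ≠ ψ s(u, t) := fun h => hwt (chainGraph_eq_of_color_eq hψ hw ht h)
  have h' : ψ s(u, w') ≠ ψ s(u, t) := fun h => hw't (chainGraph_eq_of_color_eq hψ hw' ht h)
  refine chainGraph_eq_of_color_eq hψ hw hw' ?_
  rcases hw.2 with e | e <;> rcases hw'.2 with e' | e' <;> rcases ht.2 with e'' | e'' <;> omega

end Chain

section Kempe

variable {V : Type*} {H : SimpleGraph V} {Δ : ℕ} {ψ : Sym2 V → ℕ} {a b : ℕ} {z : V}

lemma Equiv.swap_apply_mem_iff {α : Type*} [DecidableEq α] {s : Set α} {a b c : α} (ha : a ∈ s)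
    (hb : b ∈ s) : Equiv.swap a b c ∈ s ↔ c ∈ s := by
  rw [Equiv.swap_apply_def]
  split_ifs with h₁ h₂ <;> simp_all

/-- Edges touching the chain but colored neither `a` nor `b` are fixed by the swap, so the
guard need not look at the color. -/
noncomputable def kempeSwap (H : SimpleGraph V) (ψ : Sym2 V → ℕ) (a b : ℕ) (z : V) :
    Sym2 V → ℕ :=
  open Classical in
  fun f => if ∃ x ∈ f, (chainGraph H ψ a b).Reachable z x then Equiv.swap a b (ψ f) else ψ f

lemma kempeSwap_of_reachable {f : Sym2 V} {v : V} (hv : v ∈ f)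
    (hr : (chainGraph H ψ a b).Reachable z v) :
    kempeSwap H ψ a b z f = Equiv.swap a b (ψ f) :=
  if_pos ⟨v, hv, hr⟩

lemma kempeSwap_of_not_reachable {f : Sym2 V} {v : V} (hf : f ∈ H.edgeSet) (hv : v ∈ f)
    (hnr : ¬ (chainGraph H ψ a b).Reachable z v) : kempeSwap H ψ a b z f = ψ f := by
  obtain ⟨w, rfl⟩ := Sym2.mem_iff_exists.mp hv
  unfold kempeSwap
  split_ifs with h
  · obtain ⟨x, hx, hzx⟩ := h
    have hzw : (chainGraph H ψ a b).Reachable z w := by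
      rcases Sym2.mem_iff.mp hx with rfl | rfl
      exacts [absurd hzx hnr, hzx]
    have hcol : ψ s(v, w) = a ∨ ψ s(v, w) = b → False := fun hc =>
      hnr (hzw.trans (show (chainGraph H ψ a b).Adj v w from ⟨hf, hc⟩).symm.reachable)
    exact Equiv.swap_apply_of_ne_of_ne (fun h => hcol (.inl h)) (fun h => hcol (.inr h))
  · rfl

lemma IsEdgeColoring.kempeSwap (hψ : IsEdgeColoring H Δ ψ) (ha : a ∈ Set.Icc 1 Δ)
    (hb : b ∈ Set.Icc 1 Δ) : IsEdgeColoring H Δ (kempeSwap H ψ a b z) := by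
  refine ⟨fun f hf => ?_, fun f hf g hg hfg ⟨v, hvf, hvg⟩ => ?_⟩
  · unfold _root_.kempeSwap
    split_ifs
    exacts [(Equiv.swap_apply_mem_iff ha hb).mpr (hψ.1 f hf), hψ.1 f hf]
  · by_cases hr : (chainGraph H ψ a b).Reachable z v
    · rw [kempeSwap_of_reachable hvf hr, kempeSwap_of_reachable hvg hr]
      exact (Equiv.swap a b).injective.ne (hψ.2 f hf g hg hfg ⟨v, hvf, hvg⟩)
    · rw [kempeSwap_of_not_reachable hf hvf hr, kempeSwap_of_not_reachable hg hvg hr]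
      exact hψ.2 f hf g hg hfg ⟨v, hvf, hvg⟩

lemma missingColors_kempeSwap_of_not_reachable {v : V}
    (hnr : ¬ (chainGraph H ψ a b).Reachable z v) :
    missingColors H Δ (kempeSwap H ψ a b z) v = missingColors H Δ ψ v :=
  missingColors_congr fun _ hf hvf => kempeSwap_of_not_reachable hf hvf hnr

lemma mem_missingColors_kempeSwap_iff (ha : a ∈ Set.Icc 1 Δ) (hb : b ∈ Set.Icc 1 Δ) {v : V}
    {c : ℕ} (hr : (chainGraph H ψ a b).Reachable z v) :
    c ∈ missingColors H Δ (kempeSwap H ψ a b z) v ↔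
      Equiv.swap a b c ∈ missingColors H Δ ψ v := by
  rw [mem_missingColors_iff, mem_missingColors_iff, Equiv.swap_apply_mem_iff ha hb]
  refine and_congr_right fun _ => forall₂_congr fun f _ => imp_congr_right fun hvf => ?_
  rw [kempeSwap_of_reachable hvf hr, Ne, Equiv.swap_apply_eq_iff]

lemma kempeSwap_mem_missingColors (ha : a ∈ Set.Icc 1 Δ) (hb : b ∈ Set.Icc 1 Δ)
    {r x y : V} (hx : s(r, x) ∈ H.edgeSet) (hr : ¬ (chainGraph H ψ a b).Reachable z r)
    (hc : ψ s(r, x) ∈ missingColors H Δ ψ y)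
    (hab : (chainGraph H ψ a b).Reachable z y → ψ s(r, x) ≠ a ∧ ψ s(r, x) ≠ b) :
    kempeSwap H ψ a b z s(r, x) ∈ missingColors H Δ (kempeSwap H ψ a b z) y := by
  rw [kempeSwap_of_not_reachable hx (Sym2.mem_mk_left r x) hr]
  by_cases hy : (chainGraph H ψ a b).Reachable z y
  · rw [mem_missingColors_kempeSwap_iff ha hb hy,
      Equiv.swap_apply_of_ne_of_ne (hab hy).1 (hab hy).2]
    exact hc
  · rw [missingColors_kempeSwap_of_not_reachable hy]
    exact hc

end Kempe

section LinearFan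

variable {V : Type*} {G : SimpleGraph V} {Δ : ℕ} {ψ ψ' : Sym2 V → ℕ} {r s₁ : V}

/-- A linear fan `(r, r s₁, s₁, r y₁, y₁, …, r y_m, y_m)`, in which the color of `r y_{k+1}` is
missing at `y_k`, stored newest vertex first as the list `[y_m, …, y₁, s₁]`. -/
inductive LinearFan (G : SimpleGraph V) (Δ : ℕ) (ψ : Sym2 V → ℕ) (r s₁ : V) : List V → Prop
  | single : G.Adj r s₁ → LinearFan G Δ ψ r s₁ [s₁]
  | cons {x y : V} {L : List V} : LinearFan G Δ ψ r s₁ (y :: L) → G.Adj r x → x ∉ y :: L →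
      ψ s(r, x) ∈ missingColors (G.deleteEdges {s(r, s₁)}) Δ ψ y →
      LinearFan G Δ ψ r s₁ (x :: y :: L)

namespace LinearFan

variable {M : List V}

lemma adj (hM : LinearFan G Δ ψ r s₁ M) {u : V} (hu : u ∈ M) : G.Adj r u := by
  induction hM with
  | single h => rwa [List.mem_singleton.mp hu]
  | cons _ hx _ _ ih =>
    rcases List.mem_cons.mp hu with rfl | hu
    exacts [hx, ih hu]

lemma nodup (hM : LinearFan G Δ ψ r s₁ M) : M.Nodup := by
  induction hM with
  | single => exact List.nodup_singleton _
  | cons _ _ hxL _ ih => exact List.nodup_cons.mpr ⟨hxL, ih⟩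

lemma start_mem (hM : LinearFan G Δ ψ r s₁ M) : s₁ ∈ M := by
  induction hM with
  | single => exact List.mem_singleton_self _
  | cons _ _ _ _ ih => exact .tail _ ih

lemma exists_of_mem (hM : LinearFan G Δ ψ r s₁ M) {u : V} (hu : u ∈ M) :
    ∃ L, LinearFan G Δ ψ r s₁ (u :: L) := by
  induction hM with
  | single h =>
    obtain rfl := List.mem_singleton.mp hu
    exact ⟨[], .single h⟩
  | cons hyL hx hxL hc ih =>
    rcases List.mem_cons.mp hu with rfl | hu
    exacts [⟨_, .cons hyL hx hxL hc⟩, ih hu]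

lemma edge_mem {x y : V} {L : List V} (hM : LinearFan G Δ ψ r s₁ (x :: y :: L)) :
    s(r, x) ∈ (G.deleteEdges {s(r, s₁)}).edgeSet := by
  have hx : x ≠ s₁ := fun h => (List.nodup_cons.mp hM.nodup).1 <| by
    cases hM with
    | cons hyL => exact h ▸ hyL.start_mem
  rw [edgeSet_deleteEdges]
  exact ⟨hM.adj (List.mem_cons_self ..), fun h => hx (Sym2.congr_right.mp h)⟩

lemma congr (hM : LinearFan G Δ ψ r s₁ M) (hcol : ∀ u ∈ M, ψ' s(r, u) = ψ s(r, u))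
    (hmiss : ∀ u ∈ M, missingColors (G.deleteEdges {s(r, s₁)}) Δ ψ' u =
      missingColors (G.deleteEdges {s(r, s₁)}) Δ ψ u) :
    LinearFan G Δ ψ' r s₁ M := by
  induction hM with
  | single h => exact .single h
  | cons _ hx hxL hc ih =>
    refine .cons (ih (fun u hu => hcol u (.tail _ hu)) (fun u hu => hmiss u (.tail _ hu)))
      hx hxL ?_
    rw [hcol _ (.head _), hmiss _ (.tail _ (.head _))]
    exact hc

/-- Recolor `r y_m` with `γ`; its old color is now missing at `r` and at `y_{m-1}`, so induct on
the shorter fan. -/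
lemma exists_isEdgeColoring {v : V} {L : List V} {γ : ℕ}
    (hM : LinearFan G Δ ψ r s₁ (v :: L))
    (hψ : IsEdgeColoring (G.deleteEdges {s(r, s₁)}) Δ ψ)
    (hr : γ ∈ missingColors (G.deleteEdges {s(r, s₁)}) Δ ψ r)
    (hv : γ ∈ missingColors (G.deleteEdges {s(r, s₁)}) Δ ψ v) :
    ∃ c, IsEdgeColoring G Δ c := by
  classical
  induction L generalizing v ψ γ with
  | nil =>
    cases hM
    exact ⟨_, hψ.update_of_mem_missingColors hr hv⟩
  | cons y L ih =>
    have hrv := hM.edge_mem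
    obtain _ | ⟨hyL, -, hvL, hc⟩ := hM
    have hle := deleteEdges_le (G := G.deleteEdges {s(r, s₁)}) {s(r, v)}
    have hψ₁ : IsEdgeColoring (G.deleteEdges {s(r, s₁)}) Δ (Function.update ψ s(r, v) γ) :=
      (hψ.anti hle).update_of_mem_missingColors (missingColors_anti hle _ hr)
        (missingColors_anti hle _ hv)
    have hnot : ∀ u ∈ y :: L, u ∉ s(r, v) := fun u hu huv => by
      rcases Sym2.mem_iff.mp huv with rfl | rfl
      exacts [(hyL.adj hu).ne rfl, hvL hu]
    have hM₁ : LinearFan G Δ (Function.update ψ s(r, v) γ) r s₁ (y :: L) := hyL.congr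
      (fun u hu => Function.update_of_ne
        (by rintro h; exact hnot u hu (h ▸ Sym2.mem_mk_right r u)) _ _)
      (fun u hu => missingColors_update_of_notMem (hnot u hu) _)
    have hγ : γ ≠ ψ s(r, v) := (hv.2.2 _ hrv (Sym2.mem_mk_right r v)).symm
    refine ih hM₁ hψ₁ (hψ.mem_missingColors_update hrv hγ) ?_
    rw [missingColors_update_of_notMem (hnot y (List.mem_cons_self ..))]
    exact hc

variable {z : V} {a b : ℕ}

lemma kempeSwap (ha : a ∈ Set.Icc 1 Δ) (hb : b ∈ Set.Icc 1 Δ)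
    (hM : LinearFan G Δ ψ r s₁ M)
    (hr : ¬ (chainGraph (G.deleteEdges {s(r, s₁)}) ψ a b).Reachable z r)
    (hM' : ∀ y ∈ M.tail, (chainGraph (G.deleteEdges {s(r, s₁)}) ψ a b).Reachable z y →
      a ∉ missingColors (G.deleteEdges {s(r, s₁)}) Δ ψ y ∧
        b ∉ missingColors (G.deleteEdges {s(r, s₁)}) Δ ψ y) :
    LinearFan G Δ (_root_.kempeSwap (G.deleteEdges {s(r, s₁)}) ψ a b z) r s₁ M := by
  induction hM with
  | single h => exact .single h
  | cons hyL hx hxL hc ih =>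
    refine .cons (ih fun u hu => hM' u (List.mem_of_mem_tail hu)) hx hxL
      (kempeSwap_mem_missingColors ha hb (LinearFan.cons hyL hx hxL hc).edge_mem hr hc
        fun hy => ?_)
    have hab := hM' _ (List.mem_cons_self ..) hy
    exact ⟨fun h => hab.1 (h ▸ hc), fun h => hab.2 (h ▸ hc)⟩

/-- The fan survives the swap up to the first vertex `y` on the chain at which the next fan
color is `b`; after the swap `y` misses `a`. -/
lemma kempeSwap_or (ha : a ∈ Set.Icc 1 Δ) (hb : b ∈ Set.Icc 1 Δ)
    (hM : LinearFan G Δ ψ r s₁ M)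
    (hr : ¬ (chainGraph (G.deleteEdges {s(r, s₁)}) ψ a b).Reachable z r)
    (har : a ∈ missingColors (G.deleteEdges {s(r, s₁)}) Δ ψ r) :
    LinearFan G Δ (_root_.kempeSwap (G.deleteEdges {s(r, s₁)}) ψ a b z) r s₁ M ∨
      ∃ y L, LinearFan G Δ (_root_.kempeSwap (G.deleteEdges {s(r, s₁)}) ψ a b z) r s₁ (y :: L) ∧
        a ∈ missingColors (G.deleteEdges {s(r, s₁)}) Δ
          (_root_.kempeSwap (G.deleteEdges {s(r, s₁)}) ψ a b z) y := by
  induction hM with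
  | single h => exact .inl (.single h)
  | @cons x y L hyL hx hxL hc ih =>
    obtain ih | ih := ih
    · have hrx := (LinearFan.cons hyL hx hxL hc).edge_mem
      by_cases hyb : (chainGraph (G.deleteEdges {s(r, s₁)}) ψ a b).Reachable z y ∧
          ψ s(r, x) = b
      · refine .inr ⟨y, L, ih, ?_⟩
        rw [mem_missingColors_kempeSwap_iff ha hb hyb.1, Equiv.swap_apply_left, ← hyb.2]
        exact hc
      · exact .inl (.cons ih hx hxL (kempeSwap_mem_missingColors ha hb hrx hr hc fun hy =>
          ⟨(har.2.2 _ hrx (Sym2.mem_mk_left r x) ·), fun h => hyb ⟨hy, h⟩⟩))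
    · exact .inr ih

lemma exists_isEdgeColoring_of_not_reachable {u : V} {L : List V} {γ d : ℕ}
    (hψ : IsEdgeColoring (G.deleteEdges {s(r, s₁)}) Δ ψ) (hM : LinearFan G Δ ψ r s₁ (u :: L))
    (hγ : γ ∈ missingColors (G.deleteEdges {s(r, s₁)}) Δ ψ r)
    (hd : d ∈ missingColors (G.deleteEdges {s(r, s₁)}) Δ ψ u)
    (hur : ¬ (chainGraph (G.deleteEdges {s(r, s₁)}) ψ γ d).Reachable u r) :
    ∃ c, IsEdgeColoring G Δ c := by
  have hγ' : γ ∈ Set.Icc 1 Δ := ⟨hγ.1, hγ.2.1⟩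
  have hd' : d ∈ Set.Icc 1 Δ := ⟨hd.1, hd.2.1⟩
  have hψ' := hψ.kempeSwap (z := u) hγ' hd'
  have hγr : γ ∈ missingColors (G.deleteEdges {s(r, s₁)}) Δ
      (_root_.kempeSwap (G.deleteEdges {s(r, s₁)}) ψ γ d u) r := by
    rwa [missingColors_kempeSwap_of_not_reachable hur]
  obtain hM' | ⟨y, L', hM', hy⟩ := hM.kempeSwap_or hγ' hd' hur hγ
  · refine hM'.exists_isEdgeColoring hψ' hγr ?_
    rw [mem_missingColors_kempeSwap_iff hγ' hd' (.refl u), Equiv.swap_apply_left]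
    exact hd
  · exact hM'.exists_isEdgeColoring hψ' hγr hy

theorem eq_of_mem_missingColors [Fintype V] [DecidableRel G.Adj] {v w : V} {M' : List V}
    {d : ℕ} (hdeg : G.degree r ≤ Δ) (hG : ¬ ∃ c, IsEdgeColoring G Δ c)
    (hψ : IsEdgeColoring (G.deleteEdges {s(r, s₁)}) Δ ψ)
    (hM : LinearFan G Δ ψ r s₁ M) (hM' : LinearFan G Δ ψ r s₁ M') (hv : v ∈ M) (hw : w ∈ M')
    (hdv : d ∈ missingColors (G.deleteEdges {s(r, s₁)}) Δ ψ v)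
    (hdw : d ∈ missingColors (G.deleteEdges {s(r, s₁)}) Δ ψ w) : v = w := by
  by_contra hvw
  obtain ⟨Lv, hLv⟩ := hM.exists_of_mem hv
  obtain ⟨Lw, hLw⟩ := hM'.exists_of_mem hw
  obtain ⟨γ, hγ⟩ := exists_mem_missingColors_deleteEdges (ψ := ψ) hdeg (hM.adj hM.start_mem)
  by_cases hγd : γ = d
  · subst hγd
    exact hG (hLv.exists_isEdgeColoring hψ hγ hdv)
  have hleaf {u : V} {c : ℕ} (hc : c ∈ missingColors (G.deleteEdges {s(r, s₁)}) Δ ψ u)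
      (hcγd : c = γ ∨ c = d) :=
    neighborSet_chainGraph_subsingleton hψ hc hcγd
  by_cases hrv : (chainGraph (G.deleteEdges {s(r, s₁)}) ψ γ d).Reachable r v
  · by_cases hrw : (chainGraph (G.deleteEdges {s(r, s₁)}) ψ γ d).Reachable r w
    · exact hvw (hrv.eq_of_leaves (fun _ _ => neighborSet_chainGraph_diff_subsingleton hψ)
        (hleaf hγ (.inl rfl)) (hleaf hdv (.inr rfl)) (hleaf hdw (.inr rfl))
        (hLv.adj (List.mem_cons_self ..)).ne (hLw.adj (List.mem_cons_self ..)).ne hrw)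
    · exact hG (hLw.exists_isEdgeColoring_of_not_reachable hψ hγ hdw (hrw ·.symm))
  · exact hG (hLv.exists_isEdgeColoring_of_not_reachable hψ hγ hdv (hrv ·.symm))

theorem linked_of_not_linked [Fintype V] [DecidableRel G.Adj] {u v : V} {Lu Lv : List V}
    {δ lam : ℕ} (hdeg : G.degree r ≤ Δ) (hG : ¬ ∃ c, IsEdgeColoring G Δ c)
    (hψ : IsEdgeColoring (G.deleteEdges {s(r, s₁)}) Δ ψ)
    (hLu : LinearFan G Δ ψ r s₁ (u :: Lu)) (hLv : LinearFan G Δ ψ r s₁ (v :: Lv))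
    (hvLu : v ∉ u :: Lu) (hδ : δ ∈ missingColors (G.deleteEdges {s(r, s₁)}) Δ ψ u)
    (hlam : lam ∈ missingColors (G.deleteEdges {s(r, s₁)}) Δ ψ v)
    (huv : ¬ Linked (G.deleteEdges {s(r, s₁)}) ψ δ lam u v) :
    Linked (G.deleteEdges {s(r, s₁)}) ψ δ lam r v := by
  set Gd := G.deleteEdges {s(r, s₁)}
  have hδ' : δ ∈ Set.Icc 1 Δ := ⟨hδ.1, hδ.2.1⟩
  have hlam' : lam ∈ Set.Icc 1 Δ := ⟨hlam.1, hlam.2.1⟩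
  have hchain {L : List V} {y : V} (hL : LinearFan G Δ ψ r s₁ L) (hy : y ∈ L)
      (hvy : (chainGraph Gd ψ δ lam).Reachable v y) (hyv : y ≠ v) :
      δ ∉ missingColors Gd Δ ψ y ∧ lam ∉ missingColors Gd Δ ψ y :=
    ⟨fun h => huv (eq_of_mem_missingColors hdeg hG hψ hL hLu hy (.head _) h hδ ▸ hvy).symm,
      fun h => hyv (eq_of_mem_missingColors hdeg hG hψ hL hLv hy (.head _) h hlam)⟩
  by_contra hr
  have hvr := fun h => hr (Reachable.symm h)
  have hLuψ := hLu.kempeSwap hδ' hlam' hvr fun y hy hvy =>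
    hchain hLu (.tail _ hy) hvy fun h => hvLu (.tail _ (h ▸ hy))
  have hLvψ := hLv.kempeSwap hδ' hlam' hvr fun y hy hvy =>
    hchain hLv (.tail _ hy) hvy fun h => (List.nodup_cons.mp hLv.nodup).1 (h ▸ hy)
  have huψ := (missingColors_kempeSwap_of_not_reachable (huv ·.symm)).symm ▸ hδ
  have hvψ : δ ∈ missingColors Gd Δ (_root_.kempeSwap Gd ψ δ lam v) v := by
    rw [mem_missingColors_kempeSwap_iff hδ' hlam' (.refl _), Equiv.swap_apply_left]
    exact hlam
  have huv' := eq_of_mem_missingColors hdeg hG (hψ.kempeSwap hδ' hlam') hLuψ hLvψ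
    (.head _) (.head _) huψ hvψ
  exact hvLu (huv' ▸ .head _)

end LinearFan

end LinearFan

lemma List.Nodup.getElem_notMem_take {α : Type*} {l : List α} (h : l.Nodup) {n t : ℕ}
    (hn : n ≤ t) (ht : t < l.length) : l[t] ∉ l.take n := by
  intro hmem
  obtain ⟨k, hk, hkt⟩ := List.getElem_of_mem hmem
  rw [List.getElem_take] at hkt
  have := h.getElem_inj_iff.mp hkt
  simp only [List.length_take] at hk
  omega

lemma List.Sublist.getElem_ne_head {α : Type*} {T l : List α} {a : α} (hT : T.Sublist (a :: l))
    (ha : a ∉ l) {m : ℕ} (hm : 0 < m) (hmT : m < T.length) : T[m] ≠ a := by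
  rcases List.sublist_cons_iff.mp hT with hT | ⟨T', rfl, hT'⟩
  · exact fun h => ha (hT.subset (h ▸ List.getElem_mem hmT))
  · obtain ⟨m, rfl⟩ := Nat.exists_eq_add_of_lt hm
    exact fun h => ha (hT'.subset (h ▸ List.getElem_mem _))

namespace IsMultifan

variable {V : Type*} {G : SimpleGraph V} {Δ : ℕ} {φ : Sym2 V → ℕ} {r s₁ : V} {rest : List V}

lemma adj_of_mem (hF : IsMultifan G Δ φ r (s₁ :: rest)) {v : V} (hv : v ∈ s₁ :: rest) :
    G.Adj r v := by
  obtain ⟨l, hl, rfl⟩ := List.getElem_of_mem hv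
  exact hF.adj l hl

lemma exists_linearFan (hF : IsMultifan G Δ φ r (s₁ :: rest)) (t : ℕ)
    (ht : t < (s₁ :: rest).length) :
    ∃ M, LinearFan G Δ φ r s₁ ((s₁ :: rest)[t] :: M) ∧ M ⊆ (s₁ :: rest).take t := by
  have hnd := (List.nodup_cons.mp hF.nodup).2
  induction t using Nat.strong_induction_on with
  | _ t ih =>
    rcases Nat.eq_zero_or_pos t with rfl | ht0
    · exact ⟨[], .single (hF.adj 0 ht), List.nil_subset _⟩
    obtain ⟨l, hlt, hl⟩ := hF.color t ht ht0
    obtain ⟨M, hM, hMl⟩ := ih l hlt (by omega)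
    refine ⟨_ :: M, .cons hM (hF.adj t ht) ?_ hl, ?_⟩
    · rw [List.mem_cons, not_or]
      exact ⟨fun h => by have := hnd.getElem_inj_iff.mp h; omega,
        fun h => hnd.getElem_notMem_take hlt.le ht (hMl h)⟩
    · refine List.cons_subset.mpr ⟨List.mem_take_iff_getElem.mpr ⟨l, ?_, rfl⟩,
        fun u hu => List.take_subset_take_left _ hlt.le (hMl hu)⟩
      omega

lemma exists_linearFan_of_isAlphaSeq (hF : IsMultifan G Δ φ r (s₁ :: rest)) {α : ℕ}
    {T : List V} (hT : IsAlphaSeq (G.deleteEdges {s(r, s₁)}) Δ φ r s₁ (s₁ :: rest) α T)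
    (m : ℕ) (hm : m < T.length) :
    ∃ M, LinearFan G Δ φ r s₁ (T[m] :: M) ∧ M ⊆ s₁ :: T.take m := by
  have hnd := (List.nodup_cons.mp hF.nodup).2
  have hTnd := hT.sub.nodup hnd
  have hadj (k : ℕ) (hk : k < T.length) : G.Adj r T[k] :=
    hF.adj_of_mem (hT.sub.subset (List.getElem_mem hk))
  have hs₁ : G.Adj r s₁ := hF.adj 0 (by simp)
  induction m with
  | zero =>
    by_cases h : T[0] = s₁
    · exact ⟨[], by rw [h]; exact .single hs₁, List.nil_subset _⟩
    refine ⟨[s₁], .cons (.single hs₁) (hadj 0 hm) (by simpa using h) ?_, by simp⟩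
    rw [← List.head_eq_getElem hT.ne, hT.color_first]
    exact hT.alpha_missing
  | succ m ih =>
    obtain ⟨M, hM, hMm⟩ := ih (by omega)
    refine ⟨_ :: M, .cons hM (hadj _ hm) ?_ (hT.chain m hm), ?_⟩
    · have hs₁m := hT.sub.getElem_ne_head (List.nodup_cons.mp hnd).1 m.succ_pos hm
      rw [List.mem_cons, not_or]
      refine ⟨fun h => by have := hTnd.getElem_inj_iff.mp h; omega, fun h => ?_⟩
      rcases List.mem_cons.mp (hMm h) with h | h
      exacts [hs₁m h, hTnd.getElem_notMem_take m.le_succ hm h]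
    · refine List.cons_subset.mpr ⟨.tail _ (List.mem_take_iff_getElem.mpr ⟨m, ?_, rfl⟩),
        fun u hu => List.cons_subset_cons _ (List.take_subset_take_left _ m.le_succ) (hMm hu)⟩
      omega

end IsMultifan

theorem IsMultifan.exists_linearFan_notMem_of_precColor {V : Type*} [Fintype V]
    {G : SimpleGraph V} [DecidableRel G.Adj] {Δ : ℕ} {φ : Sym2 V → ℕ} {r s₁ : V}
    {rest : List V} (hdeg : G.degree r ≤ Δ) (hG : ¬ ∃ c, IsEdgeColoring G Δ c)
    (hφ : IsEdgeColoring (G.deleteEdges {s(r, s₁)}) Δ φ) (hF : IsMultifan G Δ φ r (s₁ :: rest))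
    {i j : ℕ} (hi : i < (s₁ :: rest).length) (hj : j < (s₁ :: rest).length) (hij : i ≠ j)
    {δ lam α : ℕ}
    (hδ : δ ∈ missingColors (G.deleteEdges {s(r, s₁)}) Δ φ ((s₁ :: rest)[i]'hi))
    (hlam : lam ∈ missingColors (G.deleteEdges {s(r, s₁)}) Δ φ ((s₁ :: rest)[j]'hj))
    (hα : α ∈ missingColors (G.deleteEdges {s(r, s₁)}) Δ φ s₁)
    (hprec : PrecColor (G.deleteEdges {s(r, s₁)}) Δ φ r s₁ (s₁ :: rest) α δ lam) :
    ∃ N, LinearFan G Δ φ r s₁ ((s₁ :: rest)[i] :: N) ∧ (s₁ :: rest)[j] ∉ (s₁ :: rest)[i] :: N := by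
  have hnd := (List.nodup_cons.mp hF.nodup).2
  have hji : (s₁ :: rest)[j] ≠ (s₁ :: rest)[i] := fun h => hij (hnd.getElem_inj_iff.mp h).symm
  obtain ⟨Mi, hMi, -⟩ := hF.exists_linearFan i hi
  obtain ⟨Mj, hMj, -⟩ := hF.exists_linearFan j hj
  rcases hprec with ⟨rfl, -, -⟩ | ⟨T, hT, i₀, j₀, hi₀, hj₀, hij₀, hδT, hlamT⟩
  · have hs₁ := hF.adj 0 (by simp)
    have hsi : (s₁ :: rest)[i] = s₁ :=
      LinearFan.eq_of_mem_missingColors hdeg hG hφ hMi (.single hs₁) (.head _) (.head _) hδ hα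
    exact ⟨[], by rw [hsi]; exact .single hs₁, fun h => hji (List.mem_singleton.mp h)⟩
  obtain ⟨N, hN, hNi⟩ := hF.exists_linearFan_of_isAlphaSeq hT i₀ hi₀
  obtain ⟨N', hN', -⟩ := hF.exists_linearFan_of_isAlphaSeq hT j₀ hj₀
  have hTi : T[i₀] = (s₁ :: rest)[i] :=
    LinearFan.eq_of_mem_missingColors hdeg hG hφ hN hMi (.head _) (.head _) hδT hδ
  have hTj : T[j₀] = (s₁ :: rest)[j] :=
    LinearFan.eq_of_mem_missingColors hdeg hG hφ hN' hMj (.head _) (.head _) hlamT hlam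
  have hTnd := hT.sub.nodup hnd
  refine ⟨N, hTi ▸ hN, ?_⟩
  rw [← hTi, ← hTj, List.mem_cons, not_or]
  refine ⟨fun h => by have := hTnd.getElem_inj_iff.mp h; omega, fun h => ?_⟩
  rcases List.mem_cons.mp (hNi h) with h | h
  exacts [hT.sub.getElem_ne_head (List.nodup_cons.mp hnd).1 (by omega) hj₀ h,
    hTnd.getElem_notMem_take hij₀.le hj₀ h]

theorem multifan_same_induced_unlinked_general
    {V : Type*} [Fintype V]
    (Δ : ℕ) (G : SimpleGraph V) [DecidableRel G.Adj]
    (hΔ : G.maxDegree = Δ) (hclass2 : chromIndex G = Δ + 1)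
    (r s₁ : V) (rest : List V)
    (φ : Sym2 V → ℕ)
    (hφ : IsEdgeColoring (G.deleteEdges {s(r, s₁)}) Δ φ)
    (hF : IsMultifan G Δ φ r (s₁ :: rest))
    (i j : ℕ) (hi : i < (s₁ :: rest).length) (hj : j < (s₁ :: rest).length) (hij : i ≠ j)
    (δ lam : ℕ)
    (hδ : δ ∈ missingColors (G.deleteEdges {s(r, s₁)}) Δ φ ((s₁ :: rest)[i]'hi))
    (hlam : lam ∈ missingColors (G.deleteEdges {s(r, s₁)}) Δ φ ((s₁ :: rest)[j]'hj))
    (α : ℕ) (hα : α ∈ missingColors (G.deleteEdges {s(r, s₁)}) Δ φ s₁)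
    (hprec : PrecColor (G.deleteEdges {s(r, s₁)}) Δ φ r s₁ (s₁ :: rest) α δ lam)
    (hunlinked : ¬ Linked (G.deleteEdges {s(r, s₁)}) φ δ lam
      ((s₁ :: rest)[i]'hi) ((s₁ :: rest)[j]'hj)) :
    Linked (G.deleteEdges {s(r, s₁)}) φ δ lam r ((s₁ :: rest)[j]'hj) := by
  have hdeg : G.degree r ≤ Δ := hΔ ▸ G.degree_le_maxDegree r
  have hG : ¬ ∃ c, IsEdgeColoring G Δ c := not_exists_isEdgeColoring_of_lt_chromIndex (by omega)
  obtain ⟨N, hN, hjN⟩ :=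
    hF.exists_linearFan_notMem_of_precColor hdeg hG hφ hi hj hij hδ hlam hα hprec
  obtain ⟨M, hM, -⟩ := hF.exists_linearFan j hj
  exact hN.linked_of_not_linked hdeg hG hφ hM hjN hδ hlam hunlinked

/-- Let `G` be Class 2 with maximum degree `Δ` and `F = F_φ(r, s₁:s_p)`
a multifan with respect to a critical edge `e = r s₁` and `φ ∈ C^Δ(G-e)`. Let
`δ ∈ φ̄(s_i)` and `λ ∈ φ̄(s_j)` with `i ≠ j`. If `δ` and `λ` are induced by the same
color `α ∈ φ̄(s₁)`, `δ ≺ λ`, and `s_i` and `s_j` are `(δ,λ)`-unlinked with respect to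
`φ`, then `r` lies on the `(δ,λ)`-chain containing `s_j`. -/
theorem multifan_same_induced_unlinked
    {V : Type*} [Fintype V] [DecidableEq V]
    (Δ : ℕ) (G : SimpleGraph V) [DecidableRel G.Adj]
    (hΔ : G.maxDegree = Δ) (hclass2 : chromIndex G = Δ + 1)
    (r s₁ : V) (rest : List V)
    (hcrit : IsCriticalEdge G (s(r, s₁)))
    (φ : Sym2 V → ℕ)
    (hφ : IsEdgeColoring (G.deleteEdges {s(r, s₁)}) Δ φ)
    (hF : IsMultifan G Δ φ r (s₁ :: rest))
    (i j : ℕ) (hi : i < (s₁ :: rest).length) (hj : j < (s₁ :: rest).length) (hij : i ≠ j)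
    (δ lam : ℕ)
    (hδ : δ ∈ missingColors (G.deleteEdges {s(r, s₁)}) Δ φ ((s₁ :: rest)[i]'hi))
    (hlam : lam ∈ missingColors (G.deleteEdges {s(r, s₁)}) Δ φ ((s₁ :: rest)[j]'hj))
    (α : ℕ) (hα : α ∈ missingColors (G.deleteEdges {s(r, s₁)}) Δ φ s₁)
    (hind₁ : InducedBy (G.deleteEdges {s(r, s₁)}) Δ φ r s₁ (s₁ :: rest) δ α)
    (hind₂ : InducedBy (G.deleteEdges {s(r, s₁)}) Δ φ r s₁ (s₁ :: rest) lam α)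
    (hprec : PrecColor (G.deleteEdges {s(r, s₁)}) Δ φ r s₁ (s₁ :: rest) α δ lam)
    (hunlinked : ¬ Linked (G.deleteEdges {s(r, s₁)}) φ δ lam
      ((s₁ :: rest)[i]'hi) ((s₁ :: rest)[j]'hj)) :
    Linked (G.deleteEdges {s(r, s₁)}) φ δ lam r ((s₁ :: rest)[j]'hj) :=
  multifan_same_induced_unlinked_general Δ G hΔ hclass2 r s₁ rest φ hφ hF i j hi hj hij δ lam hδ
    hlam α hα hprec hunlinked
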